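/- arXiv:1512.02564 — 2 statements merged into one kernel-verified Lean document; each statement's English description precedes it below -/
import Mathlib

section
/- For all real y with 0 < |y| < 2π, the identity (1/2)·cot(y/2) = 1/y + ∑_{n=1}^∞ 2y/(y² − (2πn)²) holds, with the series converging absolutely. -/
open Real
open Filter Topology Finset

lemma summable_aux {r : ℝ} (hr0 : 0 ≤ r) (hr1 : r < 1) :
    Summable (fun n : ℕ => 2 * r / ((1 - r ^ 2) * ((n : ℝ) + 1) ^ 2)) := by
  have h : Summable (fun n : ℕ => 1 / ((n : ℝ) + 1) ^ 2) := by
    have := (summable_nat_add_iff (f := fun n : ℕ => 1 / (n : ℝ) ^ 2) 1).mpr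
      ((Real.summable_one_div_nat_pow (p := 2)).mpr one_lt_two)
    exact this.congr fun n => by push_cast; ring_nf
  have := h.mul_left (2 * r / (1 - r ^ 2))
  exact this.congr fun n => by
    rw [div_mul_div_comm]; ring_nf

lemma term_bound {r t : ℝ} (hr1 : r < 1) (htr : |t| ≤ r) (n : ℕ) :
    |2 * t / (t ^ 2 - ((n : ℝ) + 1) ^ 2)| ≤ 2 * r / ((1 - r ^ 2) * ((n : ℝ) + 1) ^ 2) := by
  have hr0 : 0 ≤ r := le_trans (abs_nonneg t) htr
  have hn1 : (1 : ℝ) ≤ (n : ℝ) + 1 := by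
    have := Nat.cast_nonneg (α := ℝ) n; linarith
  have ht2 : t ^ 2 ≤ r ^ 2 := by
    rw [← sq_abs t]; exact pow_le_pow_left₀ (abs_nonneg t) htr 2
  have hsq : (1 : ℝ) ≤ ((n : ℝ) + 1) ^ 2 := by nlinarith
  have hr2 : r ^ 2 < 1 := by nlinarith
  have hden : (1 - r ^ 2) * ((n : ℝ) + 1) ^ 2 ≤ ((n : ℝ) + 1) ^ 2 - t ^ 2 := by
    nlinarith [mul_le_mul_of_nonneg_left hsq (sq_nonneg r)]
  have hdenpos : 0 < (1 - r ^ 2) * ((n : ℝ) + 1) ^ 2 :=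
    mul_pos (by linarith) (by positivity)
  rw [abs_div]
  have h1 : |t ^ 2 - ((n : ℝ) + 1) ^ 2| = ((n : ℝ) + 1) ^ 2 - t ^ 2 := by
    rw [abs_of_nonpos (by nlinarith)]; ring
  rw [h1]
  have h2 : |2 * t| ≤ 2 * r := by rw [abs_mul, abs_two]; linarith
  exact div_le_div₀ (by positivity) h2 hdenpos hden

lemma cot_pf_aux (x : ℝ) (hx0 : 0 < |x|) (hx1 : |x| < 1) :
    Summable (fun n : ℕ => |2 * x / (x ^ 2 - ((n : ℝ) + 1) ^ 2)|) ∧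
    π * (Real.cos (π * x) / Real.sin (π * x)) =
      1 / x + ∑' n : ℕ, 2 * x / (x ^ 2 - ((n : ℝ) + 1) ^ 2) := by
  set r : ℝ := (1 + |x|) / 2 with hr
  have hr0 : 0 ≤ r := by positivity
  have hr1 : r < 1 := by simp only [hr]; linarith
  have hxr : |x| < r := by simp only [hr]; linarith
  -- summability on the ball
  set ε : ℝ := min (|x| / 2) ((1 - |x|) / 2) with hε
  have hεpos : 0 < ε := by
    apply lt_min <;> [linarith; linarith]
  set s : Set ℝ := Metric.ball x ε with hs
  have hball : ∀ t ∈ s, 0 < |t| ∧ |t| ≤ r := by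
    intro t ht
    rw [hs, Metric.mem_ball, Real.dist_eq] at ht
    have h1 : |t| ≥ |x| - |x - t| := by
      have := abs_sub_abs_le_abs_sub x t
      linarith
    have h2 : |x - t| = |t - x| := abs_sub_comm x t
    have h3 : |t| ≤ |x| + |t - x| := by
      have := abs_sub_abs_le_abs_sub t x
      linarith [abs_nonneg (t - x)]
    constructor
    · have : ε ≤ |x| / 2 := min_le_left _ _
      rw [h2] at h1; linarith
    · have : ε ≤ (1 - |x|) / 2 := min_le_right _ _
      simp only [hr]; linarith
  have hsin_ne : ∀ t : ℝ, 0 < |t| → |t| < 1 → Real.sin (π * t) ≠ 0 := by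
    intro t ht0 ht1
    rw [Real.sin_ne_zero_iff]
    intro n hn
    have hnt : (n : ℝ) = t :=
      mul_left_cancel₀ Real.pi_ne_zero (by rw [mul_comm π (n : ℝ)]; exact hn)
    have hn0 : n ≠ 0 := by
      intro h; rw [h] at hnt; simp at hnt; rw [← hnt] at ht0; simp at ht0
    have h1 : (1 : ℝ) ≤ |(n : ℝ)| := by
      rw [← Int.cast_abs]; exact_mod_cast Int.one_le_abs hn0
    rw [hnt] at h1; linarith
  -- series functions
  set F : ℕ → ℝ → ℝ := fun N t =>
    Real.log (π * t) + ∑ j ∈ range N, Real.log (1 - t ^ 2 / ((j : ℝ) + 1) ^ 2) with hF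
  set F' : ℕ → ℝ → ℝ := fun N t =>
    1 / t + ∑ j ∈ range N, 2 * t / (t ^ 2 - ((j : ℝ) + 1) ^ 2) with hF'
  set g' : ℝ → ℝ := fun t => 1 / t + ∑' j : ℕ, 2 * t / (t ^ 2 - ((j : ℝ) + 1) ^ 2) with hg'
  set g : ℝ → ℝ := fun t => Real.log (Real.sin (π * t)) with hg
  have hfactor_pos : ∀ t : ℝ, |t| < 1 → ∀ j : ℕ, 0 < 1 - t ^ 2 / ((j : ℝ) + 1) ^ 2 := by
    intro t ht j
    have h1 : (1 : ℝ) ≤ ((j : ℝ) + 1) ^ 2 := by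
      have := Nat.cast_nonneg (α := ℝ) j; nlinarith
    have h2 : t ^ 2 < 1 := by
      rw [← sq_abs t]; nlinarith [abs_nonneg t]
    have h3 : t ^ 2 / ((j : ℝ) + 1) ^ 2 < 1 := by
      rw [div_lt_one (by positivity)]; linarith
    linarith
  -- derivatives
  have hderiv : ∀ N : ℕ, ∀ t ∈ s, HasDerivAt (F N) (F' N t) t := by
    intro N t ht
    obtain ⟨ht0, htr⟩ := hball t ht
    have ht0' : t ≠ 0 := by intro h; rw [h] at ht0; simp at ht0
    have ht1 : |t| < 1 := lt_of_le_of_lt htr hr1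
    have h1 : HasDerivAt (fun u : ℝ => Real.log (π * u)) (1 / t) t := by
      have := (((hasDerivAt_id t).const_mul π).log
        (by simp [Real.pi_ne_zero, ht0']))
      exact this.congr_deriv (by
        change π * 1 / (π * t) = 1 / t
        rw [mul_one, div_mul_cancel_left₀ Real.pi_ne_zero, one_div])
    have h2 : ∀ j : ℕ, HasDerivAt
        (fun u : ℝ => Real.log (1 - u ^ 2 / ((j : ℝ) + 1) ^ 2))
        (2 * t / (t ^ 2 - ((j : ℝ) + 1) ^ 2)) t := by
      intro j
      have hj : ((j : ℝ) + 1) ≠ 0 := by positivity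
      have hfac := hfactor_pos t ht1 j
      have hd : HasDerivAt (fun u : ℝ => 1 - u ^ 2 / ((j : ℝ) + 1) ^ 2)
          (-(2 * t / ((j : ℝ) + 1) ^ 2)) t := by
        have := ((hasDerivAt_pow 2 t).div_const (((j : ℝ) + 1) ^ 2)).const_sub 1
        exact this.congr_deriv (by norm_num)
      have := hd.log (ne_of_gt hfac)
      convert this using 1
      have ht2 : t ^ 2 < 1 := by rw [← sq_abs]; nlinarith
      have hj2 : (1 : ℝ) ≤ ((j : ℝ) + 1) ^ 2 := by
        have := Nat.cast_nonneg (α := ℝ) j; nlinarith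
      have hne : t ^ 2 - ((j : ℝ) + 1) ^ 2 ≠ 0 := by nlinarith
      have hne2 : ((j : ℝ) + 1) ^ 2 - t ^ 2 ≠ 0 := by nlinarith
      have hfacne : (1 : ℝ) - t ^ 2 / ((j : ℝ) + 1) ^ 2 ≠ 0 := ne_of_gt hfac
      rw [div_eq_div_iff hne hfacne]
      field_simp
      ring
    exact (h1.add (HasDerivAt.fun_sum fun j _ => h2 j))
  -- pointwise convergence
  have hfg : ∀ t ∈ s, Tendsto (fun N => F N t) atTop (𝓝 (g t)) := by
    intro t ht
    obtain ⟨ht0, htr⟩ := hball t ht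
    have ht0' : t ≠ 0 := by intro h; rw [h] at ht0; simp at ht0
    have ht1 : |t| < 1 := lt_of_le_of_lt htr hr1
    have heq : ∀ N : ℕ, F N t =
        Real.log (π * t * ∏ j ∈ range N, (1 - t ^ 2 / ((j : ℝ) + 1) ^ 2)) := by
      intro N
      rw [Real.log_mul (by simp [Real.pi_ne_zero, ht0'])
        (Finset.prod_ne_zero_iff.mpr fun j _ => ne_of_gt (hfactor_pos t ht1 j)),
        Real.log_prod fun j _ => ne_of_gt (hfactor_pos t ht1 j)]
    simp_rw [heq]
    exact (Real.continuousAt_log (hsin_ne t ht0 ht1)).tendsto.comp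
      (Real.tendsto_euler_sin_prod t)
  -- uniform convergence of derivatives
  have hunif : TendstoUniformlyOn F' g' atTop s := by
    have hA : TendstoUniformlyOn
        (fun N t => ∑ j ∈ range N, 2 * t / (t ^ 2 - ((j : ℝ) + 1) ^ 2))
        (fun t => ∑' j : ℕ, 2 * t / (t ^ 2 - ((j : ℝ) + 1) ^ 2)) atTop s := by
      apply tendstoUniformlyOn_tsum_nat (summable_aux hr0 hr1)
      intro n t ht
      rw [Real.norm_eq_abs]
      exact term_bound hr1 (hball t ht).2 n
    have hB : TendstoUniformlyOn (fun (_ : ℕ) t => 1 / t) (fun t => 1 / t) atTop s := by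
      intro u hu
      filter_upwards with N t ht
      exact refl_mem_uniformity hu
    exact hB.add hA
  -- apply the uniform limit theorem
  have hxs : x ∈ s := Metric.mem_ball_self hεpos
  have hmain : HasDerivAt g (g' x) x :=
    hasDerivAt_of_tendstoUniformlyOn Metric.isOpen_ball hunif
      (Eventually.of_forall hderiv) hfg hxs
  -- derivative of g directly
  have hsinx : Real.sin (π * x) ≠ 0 := hsin_ne x hx0 hx1
  have hx0' : x ≠ 0 := by intro h; rw [h] at hx0; simp at hx0
  have hg2 : HasDerivAt g (π * (Real.cos (π * x) / Real.sin (π * x))) x := by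
    have hd : HasDerivAt (fun u : ℝ => Real.sin (π * u)) (Real.cos (π * x) * π) x := by
      have := (Real.hasDerivAt_sin (π * x)).comp x ((hasDerivAt_id x).const_mul π)
      exact this.congr_deriv (by ring)
    have := hd.log hsinx
    convert this using 1
    ring
  have huniq := hmain.unique hg2
  constructor
  · apply Summable.of_norm_bounded (summable_aux hr0 hr1)
    intro n
    rw [Real.norm_eq_abs, abs_abs]
    exact term_bound hr1 (le_of_lt hxr) n
  · rw [← huniq]

/-- Partial fraction expansion of the cotangent: for `0 < |y| < 2π`,
`(1/2) cot (y/2) = 1/y + ∑_{n=1}^∞ 2y/(y² − (2πn)²)`, the series converging absolutely. -/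
theorem cot_partial_fraction (y : ℝ) (hy0 : 0 < |y|) (hy2 : |y| < 2 * π) :
    Summable (fun n : ℕ => |2 * y / (y ^ 2 - (2 * π * (n + 1)) ^ 2)|) ∧
    (1 / 2) * Real.cot (y / 2) =
      1 / y + ∑' n : ℕ, 2 * y / (y ^ 2 - (2 * π * (n + 1)) ^ 2) := by
  have hπ : 0 < π := Real.pi_pos
  set x : ℝ := y / (2 * π) with hx
  have h2π : (2 * π) ≠ 0 := by positivity
  have hy0' : y ≠ 0 := by intro h; rw [h] at hy0; simp at hy0
  have hxabs : |x| = |y| / (2 * π) := by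
    rw [hx, abs_div, abs_of_pos (show (0:ℝ) < 2 * π by positivity)]
  have hx0 : 0 < |x| := by rw [hxabs]; positivity
  have hx1 : |x| < 1 := by rw [hxabs, div_lt_one (by positivity)]; exact hy2
  obtain ⟨hsum, heq⟩ := cot_pf_aux x hx0 hx1
  have hyx : y = 2 * π * x := by rw [hx]; field_simp
  have key : ∀ n : ℕ, 2 * y / (y ^ 2 - (2 * π * ((n : ℝ) + 1)) ^ 2)
      = 1 / (2 * π) * (2 * x / (x ^ 2 - ((n : ℝ) + 1) ^ 2)) := by
    intro n
    have hxne : x ^ 2 - ((n : ℝ) + 1) ^ 2 ≠ 0 := by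
      have h1 : x ^ 2 < 1 := by rw [← sq_abs]; nlinarith
      have h2 : (1 : ℝ) ≤ ((n : ℝ) + 1) ^ 2 := by
        have := Nat.cast_nonneg (α := ℝ) n; nlinarith
      nlinarith
    rw [hyx]
    have hfac : (2 * π * x) ^ 2 - (2 * π * ((n : ℝ) + 1)) ^ 2
        = (2 * π) ^ 2 * (x ^ 2 - ((n : ℝ) + 1) ^ 2) := by ring
    rw [hfac]
    field_simp
  constructor
  · apply (hsum.mul_left (1 / (2 * π))).congr
    intro n
    rw [← abs_of_pos (show (0:ℝ) < 1 / (2 * π) by positivity), ← abs_mul, ← key n]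
  · have hcot : Real.cot (y / 2) = Real.cos (π * x) / Real.sin (π * x) := by
      rw [Real.cot_eq_cos_div_sin]
      have : y / 2 = π * x := by rw [hyx]; ring
      rw [this]
    rw [hcot]
    have htsum : ∑' n : ℕ, 2 * y / (y ^ 2 - (2 * π * ((n : ℝ) + 1)) ^ 2)
        = 1 / (2 * π) * ∑' n : ℕ, 2 * x / (x ^ 2 - ((n : ℝ) + 1) ^ 2) := by
      rw [← tsum_mul_left]
      exact tsum_congr key
    have h1y : 1 / y = 1 / (2 * π) * (1 / x) := by rw [hyx]; field_simp
    rw [htsum, h1y, ← mul_add, ← heq]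
    have hπ0 : π ≠ 0 := Real.pi_ne_zero
    generalize Real.cos (π * x) / Real.sin (π * x) = c
    field_simp
end

section
/- Gauss–Legendre quadrature of order 2 with error bound: if f : ℝ → ℝ is four times continuously differentiable on [a,b] with |f⁗(x)| ≤ M for all x ∈ [a,b], then |∫_a^b f(η) dη − ((b−a)/2)·(f((b−a)/2·(√3/3) + (a+b)/2) + f(−(b−a)/2·(√3/3) + (a+b)/2))| ≤ (b−a)⁵·M/4320. -/
open Real MeasureTheory intervalIntegral
open Set
set_option maxHeartbeats 2000000

lemma gl_step {h K : ℝ} {n : ℕ} (E D : ℝ → ℝ)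
    (hE0 : E 0 = 0)
    (hder : ∀ t ∈ Icc 0 h, HasDerivWithinAt E (D t) (Icc 0 h) t)
    (hDcont : ContinuousOn D (Icc 0 h))
    (hD : ∀ u ∈ Icc 0 h, |D u| ≤ K * u ^ n) :
    ∀ t ∈ Icc 0 h, |E t| ≤ K / (n + 1) * t ^ (n + 1) := by
  intro t ht
  have ht0 : (0:ℝ) ≤ t := ht.1
  have hsub : Icc (0:ℝ) t ⊆ Icc 0 h := Icc_subset_Icc le_rfl ht.2
  have hEcont : ContinuousOn E (Icc 0 t) :=
    fun x hx => ((hder x (hsub hx)).continuousWithinAt).mono hsub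
  have hderiv : ∀ x ∈ Ioo (0:ℝ) t, HasDerivWithinAt E (D x) (Ioi x) x := by
    intro x hx
    have hxm : x ∈ Icc 0 h := hsub (Ioo_subset_Icc_self hx)
    have : HasDerivAt E (D x) x :=
      (hder x hxm).hasDerivAt (Icc_mem_nhds hx.1 (lt_of_lt_of_le hx.2 ht.2))
    exact this.hasDerivWithinAt
  have hDint : IntervalIntegrable D volume 0 t :=
    (hDcont.mono (by rwa [uIcc_of_le ht0])).intervalIntegrable
  have key : ∫ u in (0:ℝ)..t, D u = E t - E 0 :=
    intervalIntegral.integral_eq_sub_of_hasDeriv_right_of_le ht0 hEcont hderiv hDint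
  have habs : |E t| ≤ ∫ u in (0:ℝ)..t, |D u| := by
    rw [hE0, sub_zero] at key
    rw [← key]
    exact intervalIntegral.abs_integral_le_integral_abs ht0
  have hmono : (∫ u in (0:ℝ)..t, |D u|) ≤ ∫ u in (0:ℝ)..t, K * u ^ n := by
    apply intervalIntegral.integral_mono_on ht0
    · exact (hDcont.mono (by rwa [uIcc_of_le ht0])).abs.intervalIntegrable
    · exact (Continuous.continuousOn (by continuity)).intervalIntegrable
    · exact fun x hx => hD x (hsub hx)
  have hval : (∫ u in (0:ℝ)..t, K * u ^ n) = K / (n + 1) * t ^ (n + 1) := by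
    rw [intervalIntegral.integral_const_mul, integral_pow]
    ring
  linarith

lemma gl_main (g : ℝ → ℝ) (a b M : ℝ) (hab : a < b) (hgc : Continuous g)
    (hg : ContDiffOn ℝ 4 g (Set.Icc a b))
    (hM : ∀ x ∈ Set.Icc a b, |iteratedDerivWithin 4 g (Set.Icc a b) x| ≤ M) :
    |(∫ η in a..b, g η) -
      (b - a) / 2 *
        (g ((b - a) / 2 * (Real.sqrt 3 / 3) + (a + b) / 2) +
         g (-((b - a) / 2) * (Real.sqrt 3 / 3) + (a + b) / 2))| ≤
      (b - a) ^ 5 * M / 4320 := by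
  have hM0 : 0 ≤ M := le_trans (abs_nonneg _) (hM a ⟨le_rfl, hab.le⟩)
  set s : ℝ := Real.sqrt 3 / 3 with hs_def
  set c : ℝ := (a + b) / 2 with hc_def
  set h : ℝ := (b - a) / 2 with hh_def
  have hh0 : 0 < h := by simp [hh_def]; linarith
  have hs3 : (Real.sqrt 3) ^ 2 = 3 := Real.sq_sqrt (by norm_num)
  have hs2 : s ^ 2 = 1 / 3 := by rw [hs_def]; field_simp; nlinarith [hs3]
  have hs4 : s ^ 4 = 1 / 9 := by rw [show s^4 = (s^2)^2 by ring, hs2]; norm_num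
  have hs0 : 0 < s := by rw [hs_def]; positivity
  have hs1 : s < 1 := by nlinarith [hs2, hs0]
  have hss : s + s ^ 3 ≤ 1 := by nlinarith [hs2, hs0]
  clear_value s
  have unique : UniqueDiffOn ℝ (Icc a b) := uniqueDiffOn_Icc hab
  set F : ℕ → ℝ → ℝ := fun k => iteratedDerivWithin k g (Icc a b) with hF_def
  have contF : ∀ k : ℕ, k ≤ 4 → ContinuousOn (F k) (Icc a b) := by
    intro k hk
    exact hg.continuousOn_iteratedDerivWithin (by exact_mod_cast hk) unique
  have derF : ∀ k : ℕ, k < 4 → ∀ x ∈ Icc a b, HasDerivWithinAt (F k) (F (k+1) x) (Icc a b) x := by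
    intro k hk x hx
    have hd := (hg.differentiableOn_iteratedDerivWithin
      (show (k : WithTop ℕ∞) < 4 by exact_mod_cast hk) unique x hx).hasDerivWithinAt
    rwa [← iteratedDerivWithin_succ] at hd
  have hmaps : ∀ σ : ℝ, |σ| ≤ 1 → MapsTo (fun t => c + σ * t) (Icc 0 h) (Icc a b) := by
    intro σ hσ t ht
    rw [abs_le] at hσ
    have ha' : a = c - h := by rw [hc_def, hh_def]; ring
    have hb' : b = c + h := by rw [hc_def, hh_def]; ring
    have h1 : -t ≤ σ * t := by nlinarith [ht.1]
    have h2 : σ * t ≤ t := by nlinarith [ht.1]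
    simp only [mem_Icc]
    constructor
    · rw [ha']; linarith [ht.2]
    · rw [hb']; linarith [ht.2]
  have affder : ∀ (σ t : ℝ), HasDerivWithinAt (fun t => c + σ * t) σ (Icc 0 h) t := by
    intro σ t
    simpa using ((hasDerivWithinAt_id t (Icc 0 h)).const_mul σ).const_add c
  set P : ℕ → ℝ → ℝ → ℝ := fun k σ t => F k (c + σ * t) with hP_def
  have compDer : ∀ k : ℕ, k < 4 → ∀ σ : ℝ, |σ| ≤ 1 → ∀ t ∈ Icc 0 h,
      HasDerivWithinAt (P k σ) (σ * P (k+1) σ t) (Icc 0 h) t := by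
    intro k hk σ hσ t ht
    have := (derF k hk _ (hmaps σ hσ ht)).comp t (affder σ t) (hmaps σ hσ)
    simpa [hP_def, Function.comp_def, mul_comm] using this
  have contP : ∀ k : ℕ, k ≤ 4 → ∀ σ : ℝ, |σ| ≤ 1 → ContinuousOn (P k σ) (Icc 0 h) := by
    intro k hk σ hσ
    exact (contF k hk).comp (Continuous.continuousOn (by continuity)) (hmaps σ hσ)
  have hP0 : ∀ (k : ℕ) (σ : ℝ), P k σ 0 = F k c := by
    intro k σ; simp [hP_def]
  have hs_abs : |s| ≤ 1 := by rw [abs_of_pos hs0]; exact hs1.le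
  have hns_abs : |(-s)| ≤ 1 := by rw [abs_neg]; exact hs_abs
  have h1_abs : |(1:ℝ)| ≤ 1 := by norm_num
  have hn1_abs : |(-1:ℝ)| ≤ 1 := by norm_num
  -- the error functions
  set E0 : ℝ → ℝ := fun t => (∫ x in (c - t)..(c + t), g x) - t * (P 0 s t + P 0 (-s) t) with hE0_def
  set E1 : ℝ → ℝ := fun t => (P 0 1 t + P 0 (-1) t) - (P 0 s t + P 0 (-s) t)
      - t * s * (P 1 s t - P 1 (-s) t) with hE1_def
  set E2 : ℝ → ℝ := fun t => (P 1 1 t - P 1 (-1) t) - 2 * s * (P 1 s t - P 1 (-s) t)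
      - t * s ^ 2 * (P 2 s t + P 2 (-s) t) with hE2_def
  set E3 : ℝ → ℝ := fun t => (P 2 1 t + P 2 (-1) t) - (P 2 s t + P 2 (-s) t)
      - t * s ^ 3 * (P 3 s t - P 3 (-s) t) with hE3_def
  -- auxiliary functions for the E3 bound
  set A : ℝ → ℝ := fun v => P 3 1 v - P 3 (-1) v with hA_def
  set A' : ℝ → ℝ := fun v => P 4 1 v + P 4 (-1) v with hA'_def
  have hAder : ∀ v ∈ Icc 0 h, HasDerivWithinAt A (A' v) (Icc 0 h) v := by
    intro v hv
    exact ((compDer 3 (by norm_num) 1 h1_abs v hv).sub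
      (compDer 3 (by norm_num) (-1) hn1_abs v hv)).congr_deriv (by rw [hA'_def]; ring)
  have hA'bound : ∀ v ∈ Icc 0 h, |A' v| ≤ 2 * M := by
    intro v hv
    have m1 : c + 1 * v ∈ Icc a b := hmaps 1 h1_abs hv
    have m2 : c + (-1) * v ∈ Icc a b := hmaps (-1) hn1_abs hv
    have b1 := hM _ m1
    have b2 := hM _ m2
    rw [hA'_def]
    calc |P 4 1 v + P 4 (-1) v| ≤ |P 4 1 v| + |P 4 (-1) v| := abs_add_le _ _
    _ ≤ 2 * M := by rw [hP_def]; simp only [hF_def]; linarith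
  set g2 : ℝ → ℝ := fun v => P 2 1 v + P 2 (-1) v with hg2_def
  have hg2der : ∀ v ∈ Icc 0 h, HasDerivWithinAt g2 (A v) (Icc 0 h) v := by
    intro v hv
    exact ((compDer 2 (by norm_num) 1 h1_abs v hv).add
      (compDer 2 (by norm_num) (-1) hn1_abs v hv)).congr_deriv (by rw [hA_def]; ring)
  have contA : ContinuousOn A (Icc 0 h) :=
    (contP 3 (by norm_num) 1 h1_abs).sub (contP 3 (by norm_num) (-1) hn1_abs)
  have hAbound : ∀ v ∈ Icc 0 h, |A v| ≤ 2 * M * v := by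
    intro v hv
    have hz : A 0 = 0 := by rw [hA_def]; simp [hP0]
    have := norm_image_sub_le_of_norm_deriv_le_segment' hAder
      (fun x hx => by rw [Real.norm_eq_abs]; exact hA'bound x (Ico_subset_Icc_self hx)) v hv
    rw [hz, sub_zero, Real.norm_eq_abs, sub_zero] at this
    linarith
  have hAdiff : ∀ u ∈ Icc 0 h, ∀ v ∈ Icc u h, |A v - A u| ≤ 2 * M * (v - u) := by
    intro u hu v hv
    have hsub : Icc u h ⊆ Icc 0 h := Icc_subset_Icc hu.1 le_rfl
    have := norm_image_sub_le_of_norm_deriv_le_segment'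
      (f := A) (f' := A') (fun x hx => (hAder x (hsub hx)).mono hsub)
      (fun x hx => by rw [Real.norm_eq_abs]; exact hA'bound x (hsub (Ico_subset_Icc_self hx))) v hv
    rw [Real.norm_eq_abs] at this
    exact this
  -- the E3 bound
  have hE3bound : ∀ t ∈ Icc 0 h, |E3 t| ≤ (4 / 9 * M) * t ^ 2 := by
    intro t ht
    have ht0 : 0 ≤ t := ht.1
    set u : ℝ := s * t with hu_def
    have hu0 : 0 ≤ u := mul_nonneg hs0.le ht0
    have hut : u ≤ t := by nlinarith [hs1, ht0]
    have huh : u ∈ Icc 0 h := ⟨hu0, le_trans hut ht.2⟩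
    have hsubut : Icc u t ⊆ Icc 0 h := Icc_subset_Icc hu0 ht.2
    have hAint : IntervalIntegrable A volume u t :=
      ((contA.mono hsubut).mono (by rw [uIcc_of_le hut])).intervalIntegrable
    have hint1 : ∫ v in u..t, A v = g2 t - g2 u := by
      apply intervalIntegral.integral_eq_sub_of_hasDeriv_right_of_le hut
      · exact fun x hx => ((hg2der x (hsubut hx)).continuousWithinAt).mono hsubut
      · intro x hx
        have hxm : x ∈ Icc 0 h := hsubut (Ioo_subset_Icc_self hx)
        exact ((hg2der x hxm).hasDerivAt
          (Icc_mem_nhds (lt_of_le_of_lt hu0 hx.1) (lt_of_lt_of_le hx.2 ht.2))).hasDerivWithinAt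
      · exact hAint
    have hsplit2 : g2 t - g2 u - (t - u) * A u = ∫ v in u..t, (A v - A u) := by
      rw [intervalIntegral.integral_sub hAint intervalIntegrable_const]
      rw [hint1, intervalIntegral.integral_const, smul_eq_mul]
    have hb1 : |g2 t - g2 u - (t - u) * A u| ≤ M * (t - u) ^ 2 := by
      rw [hsplit2]
      have step1 : |∫ v in u..t, (A v - A u)| ≤ ∫ v in u..t, |A v - A u| :=
        intervalIntegral.abs_integral_le_integral_abs hut
      have step2 : (∫ v in u..t, |A v - A u|) ≤ ∫ v in u..t, 2 * M * (v - u) := by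
        apply intervalIntegral.integral_mono_on hut
        · exact (((contA.mono hsubut).sub continuousOn_const).abs.mono
            (by rw [uIcc_of_le hut])).intervalIntegrable
        · exact (Continuous.continuousOn (by continuity)).intervalIntegrable
        · intro x hx
          exact hAdiff u huh x ⟨hx.1, le_trans hx.2 ht.2⟩
      have step3 : (∫ v in u..t, 2 * M * (v - u)) = M * (t - u) ^ 2 := by
        rw [intervalIntegral.integral_const_mul,
          intervalIntegral.integral_comp_sub_right (fun x => x) u, integral_id]
        ring
      rw [← step3]
      exact le_trans step1 step2
    have hb2 : |(t - u - t * s ^ 3) * A u| ≤ 2 * M * s * (1 - s - s ^ 3) * t ^ 2 := by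
      rw [abs_mul]
      have e1 : |t - u - t * s ^ 3| = t * (1 - s - s ^ 3) := by
        rw [hu_def, abs_of_nonneg (by nlinarith [hss, ht0])]
        ring
      have e2 : |A u| ≤ 2 * M * (s * t) := by
        have := hAbound u huh
        rwa [hu_def] at this
      rw [e1]
      calc t * (1 - s - s ^ 3) * |A u| ≤ t * (1 - s - s ^ 3) * (2 * M * (s * t)) := by
            apply mul_le_mul_of_nonneg_left e2
            nlinarith [hss, ht0]
      _ = 2 * M * s * (1 - s - s ^ 3) * t ^ 2 := by ring
    have hdecomp : E3 t = (g2 t - g2 u - (t - u) * A u) + (t - u - t * s ^ 3) * A u := by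
      rw [hE3_def, hg2_def, hA_def, hu_def]
      simp only [hP_def, one_mul, neg_one_mul, neg_mul]
      ring
    have key : M * (t - u) ^ 2 + 2 * M * s * (1 - s - s ^ 3) * t ^ 2 = 4 / 9 * M * t ^ 2 := by
      rw [hu_def]
      linear_combination (-(M * t ^ 2)) * hs2 - (2 * (M * t ^ 2)) * hs4
    calc |E3 t| ≤ |g2 t - g2 u - (t - u) * A u| + |(t - u - t * s ^ 3) * A u| := by
          rw [hdecomp]; exact abs_add_le _ _
    _ ≤ M * (t - u) ^ 2 + 2 * M * s * (1 - s - s ^ 3) * t ^ 2 := add_le_add hb1 hb2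
    _ = 4 / 9 * M * t ^ 2 := key
  -- derivative chains
  have hE2der : ∀ t ∈ Icc 0 h, HasDerivWithinAt E2 (E3 t) (Icc 0 h) t := by
    intro t ht
    have raw := (((compDer 1 (by norm_num) 1 h1_abs t ht).sub
        (compDer 1 (by norm_num) (-1) hn1_abs t ht)).sub
      (((compDer 1 (by norm_num) s hs_abs t ht).sub
        (compDer 1 (by norm_num) (-s) hns_abs t ht)).const_mul (2 * s))).sub
      (((hasDerivWithinAt_id t (Icc 0 h)).mul_const (s ^ 2)).mul
        ((compDer 2 (by norm_num) s hs_abs t ht).add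
          (compDer 2 (by norm_num) (-s) hns_abs t ht)))
    refine raw.congr_deriv ?_
    rw [hE3_def]
    simp only [id_eq, Pi.add_apply, Pi.sub_apply, Nat.reduceAdd]
    linear_combination (-(3 * (P 2 s t + P 2 (-s) t))) * hs2
  have hE1der : ∀ t ∈ Icc 0 h, HasDerivWithinAt E1 (E2 t) (Icc 0 h) t := by
    intro t ht
    have raw := (((compDer 0 (by norm_num) 1 h1_abs t ht).add
        (compDer 0 (by norm_num) (-1) hn1_abs t ht)).sub
      ((compDer 0 (by norm_num) s hs_abs t ht).add
        (compDer 0 (by norm_num) (-s) hns_abs t ht))).sub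
      (((hasDerivWithinAt_id t (Icc 0 h)).mul_const s).mul
        ((compDer 1 (by norm_num) s hs_abs t ht).sub
          (compDer 1 (by norm_num) (-s) hns_abs t ht)))
    refine raw.congr_deriv ?_
    rw [hE2_def]
    simp only [id_eq, Pi.add_apply, Pi.sub_apply, Nat.reduceAdd]
    ring
  have hE0der : ∀ t ∈ Icc 0 h, HasDerivWithinAt E0 (E1 t) (Icc 0 h) t := by
    intro t ht
    set G1 : ℝ → ℝ := fun w => ∫ x in c..w, g x with hG1_def
    have hG1 : ∀ w : ℝ, HasDerivAt G1 (g w) w := by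
      intro w
      exact intervalIntegral.integral_hasDerivAt_right (hgc.intervalIntegrable _ _)
        hgc.aestronglyMeasurable.stronglyMeasurableAtFilter hgc.continuousAt
    have hsplit : (fun t : ℝ => ∫ x in (c - t)..(c + t), g x) = fun t => G1 (c + t) - G1 (c - t) := by
      funext t
      have h1 : IntervalIntegrable g volume (c - t) c := hgc.intervalIntegrable _ _
      have h2 : IntervalIntegrable g volume c (c + t) := hgc.intervalIntegrable _ _
      rw [← intervalIntegral.integral_add_adjacent_intervals h1 h2, hG1_def]
      simp only
      rw [intervalIntegral.integral_symm c (c - t)]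
      ring
    have hplus : HasDerivAt (fun t : ℝ => G1 (c + t)) (g (c + t)) t := by
      simpa [Function.comp_def] using (hG1 (c + t)).comp t ((hasDerivAt_id t).const_add c)
    have hminus : HasDerivAt (fun t : ℝ => G1 (c - t)) (-(g (c - t))) t := by
      simpa [Function.comp_def] using (hG1 (c - t)).comp t ((hasDerivAt_id t).const_sub c)
    have hI : HasDerivAt (fun t : ℝ => ∫ x in (c - t)..(c + t), g x) (g (c + t) + g (c - t)) t := by
      rw [hsplit]
      exact (hplus.sub hminus).congr_deriv (by ring)
    have raw := (hI.hasDerivWithinAt.sub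
      ((hasDerivWithinAt_id t (Icc 0 h)).mul
        ((compDer 0 (by norm_num) s hs_abs t ht).add
          (compDer 0 (by norm_num) (-s) hns_abs t ht))))
    refine raw.congr_deriv ?_
    rw [hE1_def]
    simp only [id_eq, hP_def, hF_def, iteratedDerivWithin_zero, Pi.add_apply, one_mul, neg_one_mul, neg_mul]
    rw [show c + -t = c - t by ring, show c + t = c + 1 * t by ring]
    ring_nf
  have hE3cont : ContinuousOn E3 (Icc 0 h) := by
    refine ContinuousOn.sub (ContinuousOn.sub ?_ ?_) ?_
    · exact (contP 2 (by norm_num) 1 h1_abs).add (contP 2 (by norm_num) (-1) hn1_abs)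
    · exact (contP 2 (by norm_num) s hs_abs).add (contP 2 (by norm_num) (-s) hns_abs)
    · exact (continuousOn_id.mul continuousOn_const).mul
        ((contP 3 (by norm_num) s hs_abs).sub (contP 3 (by norm_num) (-s) hns_abs))
  have hE2cont : ContinuousOn E2 (Icc 0 h) := fun t ht => (hE2der t ht).continuousWithinAt
  have hE1cont : ContinuousOn E1 (Icc 0 h) := fun t ht => (hE1der t ht).continuousWithinAt
  have hE2z : E2 0 = 0 := by rw [hE2_def]; simp [hP0]
  have hE1z : E1 0 = 0 := by rw [hE1_def]; simp [hP0]
  have hE0z : E0 0 = 0 := by rw [hE0_def]; simp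
  have hE2bound := gl_step E2 E3 hE2z hE2der hE3cont hE3bound
  have hE1bound := gl_step E1 E2 hE1z hE1der hE2cont (by
    intro u hu
    have := hE2bound u hu
    calc |E2 u| ≤ 4 / 9 * M / (2 + 1) * u ^ (2 + 1) := this
    _ = (4 / 27 * M) * u ^ 3 := by push_cast; ring)
  have hE0bound := gl_step E0 E1 hE0z hE0der hE1cont (by
    intro u hu
    have := hE1bound u hu
    calc |E1 u| ≤ 4 / 27 * M / (3 + 1) * u ^ (3 + 1) := this
    _ = (1 / 27 * M) * u ^ 4 := by push_cast; ring)
  have final := hE0bound h ⟨hh0.le, le_rfl⟩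
  have hid : E0 h = (∫ η in a..b, g η) - h * (g (h * s + c) + g (-h * s + c)) := by
    have hca : c - h = a := by rw [hc_def, hh_def]; ring
    have hcb : c + h = b := by rw [hc_def, hh_def]; ring
    rw [hE0_def]
    simp only [hP_def, hF_def, iteratedDerivWithin_zero]
    rw [hca, hcb, show c + s * h = h * s + c by ring, show c + -s * h = -h * s + c by ring]
  rw [← hid]
  calc |E0 h| ≤ 1 / 27 * M / (4 + 1) * h ^ (4 + 1) := final
  _ = M * h ^ 5 / 135 := by push_cast; ring
  _ = (b - a) ^ 5 * M / 4320 := by rw [hh_def]; ring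

/-- Two-point Gauss–Legendre quadrature with rigorous error bound. -/
theorem gauss_legendre_order_two (f : ℝ → ℝ) (a b M : ℝ) (hab : a ≤ b)
    (hf : ContDiffOn ℝ 4 f (Set.Icc a b))
    (hM : ∀ x ∈ Set.Icc a b, |iteratedDerivWithin 4 f (Set.Icc a b) x| ≤ M) :
    |(∫ η in a..b, f η) -
      (b - a) / 2 *
        (f ((b - a) / 2 * (Real.sqrt 3 / 3) + (a + b) / 2) +
         f (-((b - a) / 2) * (Real.sqrt 3 / 3) + (a + b) / 2))| ≤
      (b - a) ^ 5 * M / 4320 := by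
  rcases eq_or_lt_of_le hab with rfl | hab'
  · simp
  set g : ℝ → ℝ := fun x => f (min (max x a) b) with hg_def
  have hclamp : ∀ x, min (max x a) b ∈ Set.Icc a b := by
    intro x
    constructor
    · exact le_min (le_max_right x a) hab
    · exact min_le_right _ _
  have heq : Set.EqOn f g (Set.Icc a b) := by
    intro x hx
    simp only [hg_def, max_eq_left hx.1, min_eq_left hx.2]
  have hgc : Continuous g := by
    apply hf.continuousOn.comp_continuous
    · exact (continuous_id.max continuous_const).min continuous_const
    · exact hclamp
  have hg : ContDiffOn ℝ 4 g (Set.Icc a b) := hf.congr (fun x hx => (heq hx).symm)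
  have hMg : ∀ x ∈ Set.Icc a b, |iteratedDerivWithin 4 g (Set.Icc a b) x| ≤ M := by
    intro x hx
    rw [← iteratedDerivWithin_congr heq hx]
    exact hM x hx
  have hnode1 : (b - a) / 2 * (Real.sqrt 3 / 3) + (a + b) / 2 ∈ Set.Icc a b := by
    have h3 : Real.sqrt 3 / 3 < 1 := by
      rw [div_lt_one (by norm_num)]
      nlinarith [Real.sq_sqrt (by norm_num : (0:ℝ) ≤ 3), Real.sqrt_nonneg 3]
    have h30 : 0 ≤ Real.sqrt 3 / 3 := by positivity
    constructor <;> nlinarith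
  have hnode2 : -((b - a) / 2) * (Real.sqrt 3 / 3) + (a + b) / 2 ∈ Set.Icc a b := by
    have h3 : Real.sqrt 3 / 3 < 1 := by
      rw [div_lt_one (by norm_num)]
      nlinarith [Real.sq_sqrt (by norm_num : (0:ℝ) ≤ 3), Real.sqrt_nonneg 3]
    have h30 : 0 ≤ Real.sqrt 3 / 3 := by positivity
    constructor <;> nlinarith
  have hint : (∫ η in a..b, f η) = ∫ η in a..b, g η := by
    apply intervalIntegral.integral_congr
    rwa [Set.uIcc_of_le hab]
  rw [hint, heq hnode1, heq hnode2]
  exact gl_main g a b M hab' hgc hg hMg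
end
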